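/- arXiv:1107.4866 — 3 statements merged into one kernel-verified Lean document; each statement's English description precedes it below -/
import Mathlib

section
/- Let u be a classical solution, smooth in both variables and with zero mean value in x, of the generalised Burgers equation u_t + f'(u) u_x − ν u_xx = 0 on [0,T) × S¹ with T ≤ 1. Then t · u_x(t,x) ≤ σ⁻¹ for all t ∈ (0,T) and x ∈ S¹, where σ > 0 is the strong convexity constant of f. -/
open MeasureTheory Real Set Filter
open scoped ENNReal Topology

noncomputable section

/-- Lebesgue measure on one period `(0,1]` of the circle `S¹ = ℝ/ℤ`. -/
def cellMeasure : Measure ℝ := volume.restrict (Set.Ioc (0:ℝ) 1)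

/-- The homogeneous Sobolev norm `|w|_{m,p}` of a `1`-periodic function,
i.e. the `L^p` norm over one period of the `m`-th derivative. -/
def sobNorm (m : ℕ) (p : ℝ≥0∞) (w : ℝ → ℝ) : ℝ :=
  (eLpNorm (iteratedDeriv m w) p cellMeasure).toReal

/-- `‖w‖_m = |w|_{m,2}`. -/
def hNorm (m : ℕ) (w : ℝ → ℝ) : ℝ := sobNorm m 2 w

/-- A smooth, `1`-periodic, zero mean value function on the circle. -/
structure ZeroMeanPeriodic (w : ℝ → ℝ) : Prop where
  smooth : ContDiff ℝ (⊤ : ℕ∞) w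
  periodic : Function.Periodic w 1
  zeroMean : ∫ x in (0:ℝ)..1, w x = 0

/-- Structural assumptions on the flux `f` : smoothness, strong convexity
with constant `σ`, and at most polynomial growth of all derivatives. -/
structure BurgersFlux (f : ℝ → ℝ) (σ : ℝ) : Prop where
  smooth : ContDiff ℝ (⊤ : ℕ∞) f
  sigma_pos : 0 < σ
  strongly_convex : ∀ x : ℝ, σ ≤ deriv (deriv f) x
  poly_growth : ∀ m : ℕ, ∃ n : ℕ, ∃ C : ℝ, 0 < C ∧
    ∀ x : ℝ, |iteratedDeriv m f x| ≤ C * (1 + |x|) ^ n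

/-- `u` solves the unforced generalised Burgers equation
`u_t + f'(u) u_x - ν u_xx = 0` classically at all times in `J`. -/
def SolvesBurgers (f : ℝ → ℝ) (ν : ℝ) (u : ℝ → ℝ → ℝ) (J : Set ℝ) : Prop :=
  ∀ t ∈ J, ∀ x : ℝ,
    deriv (fun s => u s x) t + deriv f (u t x) * deriv (u t) x
      - ν * deriv (deriv (u t)) x = 0

local notation "∞S" => ((⊤:ℕ∞) : WithTop ℕ∞)

private lemma aux_deriv_nonneg_left {g : ℝ → ℝ} {d a b : ℝ} (hab : a < b)
    (hd : HasDerivAt g d b) (hle : ∀ t ∈ Set.Ico a b, g t ≤ g b) : 0 ≤ d := by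
  rw [hasDerivAt_iff_tendsto_slope] at hd
  have h1 : Tendsto (slope g b) (𝓝[<] b) (𝓝 d) :=
    hd.mono_left (nhdsWithin_mono _ fun y hy => ne_of_lt hy)
  refine ge_of_tendsto h1 ?_
  filter_upwards [Ioo_mem_nhdsLT_of_mem ⟨hab, le_refl b⟩] with t ht
  have h2 : g t - g b ≤ 0 := sub_nonpos.2 (hle t ⟨ht.1.le, ht.2⟩)
  have h3 : t - b < 0 := sub_neg.2 ht.2
  rw [slope_def_field]
  exact div_nonneg_of_nonpos h2 h3.le

private lemma aux_deriv2_nonpos {g : ℝ → ℝ} (hg : ContDiff ℝ ∞S g) {x : ℝ}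
    (hmax : ∀ y, g y ≤ g x) : deriv (deriv g) x ≤ 0 := by
  have hone : (1 : WithTop ℕ∞) ≤ ∞S := by exact_mod_cast ((by simp) : (1:ℕ∞) ≤ ⊤)
  by_contra h
  push_neg at h
  have hg1 : ContDiff ℝ ∞S (deriv g) := (contDiff_infty_iff_deriv.1 hg).2
  have hd : HasDerivAt (deriv g) (deriv (deriv g) x) x :=
    ((hg1.differentiable (by simp)) x).hasDerivAt
  have h0 : deriv g x = 0 :=
    IsLocalMax.deriv_eq_zero (Filter.Eventually.of_forall hmax)
  rw [hasDerivAt_iff_tendsto_slope] at hd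
  have h1 : Tendsto (slope (deriv g) x) (𝓝[>] x) (𝓝 (deriv (deriv g) x)) :=
    hd.mono_left (nhdsWithin_mono _ fun y hy => ne_of_gt hy)
  have h2 : ∀ᶠ t in 𝓝[>] x, 0 < slope (deriv g) x t :=
    h1.eventually (eventually_gt_nhds h)
  obtain ⟨u, hu, hsub⟩ := mem_nhdsGT_iff_exists_Ioo_subset.1 h2
  have hpos : ∀ t ∈ Set.Ioo x u, 0 < deriv g t := by
    intro t ht
    have h4 := hsub ht
    simp only [Set.mem_setOf_eq, slope_def_field, h0, sub_zero] at h4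
    have h3 : 0 < t - x := sub_pos.2 ht.1
    rcases div_pos_iff.1 h4 with ⟨h5, _⟩ | ⟨_, h6⟩
    · exact h5
    · linarith
  have hxu : x < u := hu
  set m := (x + u)/2 with hm
  have hxm : x < m := by simp only [hm]; linarith
  have hmu : m < u := by simp only [hm]; linarith
  have hmono : StrictMonoOn g (Set.Icc x m) := by
    refine strictMonoOn_of_deriv_pos (convex_Icc x m) (hg.continuous.continuousOn) ?_
    intro t ht
    rw [interior_Icc] at ht
    exact hpos t ⟨ht.1, lt_of_lt_of_le ht.2 hmu.le⟩
  exact absurd (hmono (left_mem_Icc.2 hxm.le) (right_mem_Icc.2 hxm.le) hxm)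
    (not_lt.2 (hmax m))

private lemma aux_periodic_deriv {g : ℝ → ℝ} (hp : Function.Periodic g 1) :
    Function.Periodic (deriv g) 1 := by
  intro x
  have h1 : (fun y => g (y + 1)) = g := funext fun y => hp y
  have h2 := deriv_comp_add_const (f := g) (a := 1) (x := x)
  rw [h1] at h2
  exact h2.symm

set_option maxHeartbeats 1000000 in
/-- For a classical, space-periodic, zero mean value solution of the
unforced generalised Burgers equation on `[0,T) × S¹` with `T ≤ 1`, one has
`t · u_x(t,x) ≤ σ⁻¹` for all `t ∈ (0,T)` and all `x`. -/
theorem statement1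
    (f : ℝ → ℝ) (σ ν T : ℝ) (hf : BurgersFlux f σ) (hν : ν ∈ Set.Ioc (0:ℝ) 1)
    (hT0 : 0 < T) (hT1 : T ≤ 1) (u : ℝ → ℝ → ℝ)
    (hsm : ContDiffOn ℝ (⊤ : ℕ∞) (fun q : ℝ × ℝ => u q.1 q.2) (Set.Ico (0:ℝ) T ×ˢ Set.univ))
    (hx : ∀ t ∈ Set.Ico (0:ℝ) T, ZeroMeanPeriodic (u t))
    (heq : SolvesBurgers f ν u (Set.Ioo 0 T)) :
    ∀ t ∈ Set.Ioo (0:ℝ) T, ∀ x : ℝ, t * deriv (u t) x ≤ σ⁻¹ := by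
  obtain ⟨hν0, hν1⟩ := hν
  intro t₀ ht₀ x₀
  by_contra hcon
  push_neg at hcon
  have hσ := hf.sigma_pos
  have ht0 : 0 < t₀ := ht₀.1
  have htT : t₀ < T := ht₀.2
  set U : ℝ × ℝ → ℝ := fun q => u q.1 q.2 with hUdef
  have hOpen : IsOpen (Set.Ioo (0:ℝ) T ×ˢ (Set.univ : Set ℝ)) := isOpen_Ioo.prod isOpen_univ
  have hUat : ∀ {t x : ℝ}, t ∈ Set.Ioo (0:ℝ) T → ContDiffAt ℝ (⊤ : ℕ∞) U (t, x) := by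
    intro t x ht
    refine hsm.contDiffAt ?_
    exact mem_nhds_iff.2 ⟨_, Set.prod_mono Set.Ioo_subset_Ico_self subset_rfl,
      hOpen, ⟨ht, Set.mem_univ x⟩⟩
  have hut : ∀ {t : ℝ}, t ∈ Set.Ioo (0:ℝ) T → ContDiff ℝ (⊤ : ℕ∞) (u t) := by
    intro t ht
    rw [contDiff_iff_contDiffAt]
    intro x
    have h1 : ContDiffAt ℝ (⊤ : ℕ∞) (fun x : ℝ => (t, x)) x := (contDiff_const.prodMk contDiff_id).contDiffAt
    exact (hUat ht).comp x h1
  set F := fderiv ℝ U with hFdef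
  have hUdiff : ∀ q : ℝ × ℝ, q.1 ∈ Set.Ioo (0:ℝ) T → HasFDerivAt U (F q) q := by
    intro q hq
    exact ((hUat (x := q.2) hq).differentiableAt (by simp)).hasFDerivAt
  have hderiv_x : ∀ {t x : ℝ}, t ∈ Set.Ioo (0:ℝ) T →
      HasDerivAt (u t) (F (t,x) ((0:ℝ),(1:ℝ))) x := by
    intro t x ht
    have h1 : HasDerivAt (fun y : ℝ => (t, y)) ((0:ℝ),(1:ℝ)) x :=
      (hasDerivAt_const x t).prodMk (hasDerivAt_id x)
    exact (hUdiff (t,x) ht).comp_hasDerivAt x h1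
  have hvx : ∀ {t x : ℝ}, t ∈ Set.Ioo (0:ℝ) T → deriv (u t) x = F (t,x) ((0:ℝ),(1:ℝ)) :=
    fun ht => (hderiv_x ht).deriv
  have hderiv_t : ∀ {t x : ℝ}, t ∈ Set.Ioo (0:ℝ) T →
      HasDerivAt (fun s => u s x) (F (t,x) ((1:ℝ),(0:ℝ))) t := by
    intro t x ht
    have h1 : HasDerivAt (fun s : ℝ => (s, x)) ((1:ℝ),(0:ℝ)) t :=
      (hasDerivAt_id t).prodMk (hasDerivAt_const t x)
    exact (hUdiff (t,x) ht).comp_hasDerivAt t h1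
  have hPDE : ∀ {t : ℝ}, t ∈ Set.Ioo (0:ℝ) T → ∀ x : ℝ,
      F (t,x) ((1:ℝ),(0:ℝ)) = ν * deriv (deriv (u t)) x - deriv f (u t x) * deriv (u t) x := by
    intro t ht x
    have h1 := heq t ht x
    have h2 : deriv (fun s => u s x) t = F (t,x) ((1:ℝ),(0:ℝ)) := (hderiv_t ht).deriv
    linarith
  have hvcont : ∀ {t x : ℝ}, t ∈ Set.Ioo (0:ℝ) T →
      ContinuousAt (fun q : ℝ × ℝ => F q ((0:ℝ),(1:ℝ))) (t,x) := by
    intro t x ht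
    have h1 : ContinuousAt F (t,x) := ((hUat ht).fderiv_right (m := 1) (by exact WithTop.coe_le_coe.2 (le_top : ((1 + 1 : ℕ) : ℕ∞) ≤ ⊤))).continuousAt
    exact ((ContinuousLinearMap.apply ℝ ℝ ((0:ℝ),(1:ℝ))).continuous.continuousAt).comp h1
  have hper : ∀ {t : ℝ}, t ∈ Set.Ioo (0:ℝ) T →
      Function.Periodic (fun x => F (t,x) ((0:ℝ),(1:ℝ))) 1 := by
    intro t ht x
    have hp := (hx t ⟨ht.1.le, ht.2⟩).periodic
    have h1 := aux_periodic_deriv hp x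
    simp only []
    rw [← hvx ht, ← hvx ht]
    exact h1
  -- numeric setup
  set v0 := deriv (u t₀) x₀ with hv0def
  have hst : 0 < σ * t₀ := mul_pos hσ ht0
  have hv0' : (σ * t₀)⁻¹ < v0 := by
    have h1 : (σ * t₀)⁻¹ = σ⁻¹ / t₀ := by rw [mul_inv, div_eq_mul_inv]
    rw [h1, div_lt_iff₀ ht0, mul_comm]
    exact hcon
  have hv0pos : 0 < v0 := lt_trans (inv_pos.2 hst) hv0'
  set ε := (v0 - (σ * t₀)⁻¹) / 2 with hεdef
  have hεpos : 0 < ε := by simp only [hεdef]; linarith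
  set t₁ := min (t₀ / 2) (ε * σ * t₀ ^ 2 / 2) with ht₁def
  have ht₁pos : 0 < t₁ := lt_min (by positivity) (by positivity)
  have ht₁le : t₁ ≤ t₀ / 2 := min_le_left _ _
  have ht₁le2 : t₁ ≤ ε * σ * t₀ ^ 2 / 2 := min_le_right _ _
  have ht₁lt : t₁ < t₀ := lt_of_le_of_lt ht₁le (by linarith)
  have hta : 0 < σ * (t₀ - t₁) := mul_pos hσ (by linarith)
  have hB0 : (σ * (t₀ - t₁))⁻¹ + ε ≤ v0 := by
    have key : (σ * (t₀ - t₁))⁻¹ ≤ (σ * t₀)⁻¹ + ε := by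
      rw [inv_eq_one_div, div_le_iff₀ hta]
      have hbinv : (σ * t₀)⁻¹ * (σ * t₀) = 1 := inv_mul_cancel₀ hst.ne'
      nlinarith [mul_pos hεpos hσ, mul_pos (mul_pos hεpos hσ) ht0,
        mul_pos (inv_pos.2 hst) (mul_pos hσ ht₁pos)]
    have hv0eq : v0 = (σ * t₀)⁻¹ + 2 * ε := by simp only [hεdef]; ring
    linarith
  set B : ℝ → ℝ := fun t => (σ * (t - t₁))⁻¹ + ε with hBdef
  -- bound C on K₀
  set K₀ := Set.Icc t₁ t₀ ×ˢ Set.Icc (0:ℝ) 1 with hK₀def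
  have hK₀c : IsCompact K₀ := isCompact_Icc.prod isCompact_Icc
  have hK₀Ω : ∀ q ∈ K₀, q.1 ∈ Set.Ioo (0:ℝ) T := fun q hq =>
    ⟨lt_of_lt_of_le ht₁pos hq.1.1, lt_of_le_of_lt hq.1.2 htT⟩
  have hcontK₀ : ContinuousOn (fun q : ℝ × ℝ => F q ((0:ℝ),(1:ℝ))) K₀ := by
    intro q hq
    have := hvcont (t := q.1) (x := q.2) (hK₀Ω q hq)
    exact this.continuousWithinAt
  have hK₀ne : K₀.Nonempty := ⟨(t₁, 0), ⟨⟨le_refl _, ht₁lt.le⟩, ⟨le_refl _, zero_le_one⟩⟩⟩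
  obtain ⟨qC, hqC, hqCmax⟩ := hK₀c.exists_isMaxOn hK₀ne hcontK₀
  set C := max (F qC ((0:ℝ),(1:ℝ))) 0 with hCdef
  have hC : ∀ q ∈ K₀, F q ((0:ℝ),(1:ℝ)) ≤ C := fun q hq =>
    le_trans (hqCmax hq) (le_max_left _ _)
  have hC0 : (0:ℝ) ≤ C := le_max_right _ _
  -- choice of a
  set δ := min ((t₀ - t₁) / 2) ((σ * (C + 1))⁻¹) with hδdef
  have hδpos : 0 < δ := lt_min (by linarith) (by positivity)
  set a := t₁ + δ with hadef
  have ha1 : t₁ < a := by simp only [hadef]; linarith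
  have ha2 : a < t₀ := by
    have := min_le_left ((t₀ - t₁) / 2) ((σ * (C + 1))⁻¹)
    simp only [hadef]; simp only [hδdef] at *; linarith
  have hBa : C < (σ * δ)⁻¹ := by
    have h1 : δ ≤ (σ * (C + 1))⁻¹ := min_le_right _ _
    have h2 : 0 < σ * (C + 1) := by positivity
    have h3 : σ * δ ≤ (C + 1)⁻¹ := by
      have := mul_le_mul_of_nonneg_left h1 hσ.le
      calc σ * δ ≤ σ * (σ * (C + 1))⁻¹ := this
        _ = (C + 1)⁻¹ := by field_simp
    have h4 : C + 1 ≤ (σ * δ)⁻¹ := by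
      have h5 := one_div_le_one_div_of_le (by positivity : (0:ℝ) < σ * δ) h3
      rwa [one_div, inv_inv, one_div] at h5
    linarith
  -- EVT on K
  set K := Set.Icc a t₀ ×ˢ Set.Icc (0:ℝ) 1 with hKdef
  have hKc : IsCompact K := isCompact_Icc.prod isCompact_Icc
  have hKΩ : ∀ q ∈ K, q.1 ∈ Set.Ioo (0:ℝ) T := fun q hq =>
    ⟨lt_trans ht₁pos (lt_of_lt_of_le ha1 hq.1.1), lt_of_le_of_lt hq.1.2 htT⟩
  set w : ℝ × ℝ → ℝ := fun q => F q ((0:ℝ),(1:ℝ)) - B q.1 with hwdef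
  have hBcont : ∀ t : ℝ, t₁ < t → ContinuousAt B t := by
    intro t ht
    have h1 : ContinuousAt (fun s : ℝ => σ * (s - t₁)) t :=
      (continuous_const.mul (continuous_id.sub continuous_const)).continuousAt
    have h2 : σ * (t - t₁) ≠ 0 := (mul_pos hσ (by linarith)).ne'
    exact ((h1.inv₀ h2).add continuousAt_const)
  have hwcont : ContinuousOn w K := by
    intro q hq
    refine ContinuousWithinAt.sub ?_ ?_
    · exact ((hvcont (t := q.1) (x := q.2) (hKΩ q hq)).continuousWithinAt)
    · exact (((hBcont q.1 (lt_of_lt_of_le ha1 hq.1.1)).comp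
        continuous_fst.continuousAt).continuousWithinAt)
  have hKne : K.Nonempty := ⟨(t₀, 0), ⟨⟨ha2.le, le_refl _⟩, ⟨le_refl _, zero_le_one⟩⟩⟩
  obtain ⟨⟨ts, xs⟩, hqsK, hmax⟩ := hKc.exists_isMaxOn hKne hwcont
  have htsI : ts ∈ Set.Icc a t₀ := hqsK.1
  have hxsI : xs ∈ Set.Icc (0:ℝ) 1 := hqsK.2
  have htsΩ : ts ∈ Set.Ioo (0:ℝ) T :=
    ⟨lt_trans ht₁pos (lt_of_lt_of_le ha1 htsI.1), lt_of_le_of_lt htsI.2 htT⟩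
  -- value at (t₀, fract x₀)
  have hfract_mem : Int.fract x₀ ∈ Set.Icc (0:ℝ) 1 :=
    ⟨Int.fract_nonneg x₀, (Int.fract_lt_one x₀).le⟩
  have hfract_eq : F (t₀, Int.fract x₀) ((0:ℝ),(1:ℝ)) = v0 := by
    have h1 := (hper ht₀).sub_int_mul_eq (x := x₀) ⌊x₀⌋
    have h2 : x₀ - (⌊x₀⌋ : ℝ) * 1 = Int.fract x₀ := by
      rw [mul_one]; rfl
    rw [h2] at h1
    rw [h1, ← hvx ht₀]
  have hw0 : (0:ℝ) ≤ w (ts, xs) := by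
    have h1 : (t₀, Int.fract x₀) ∈ K := ⟨⟨ha2.le, le_refl _⟩, hfract_mem⟩
    have h2 := hmax h1
    have h3 : w (t₀, Int.fract x₀) = v0 - B t₀ := by
      simp only [hwdef, hfract_eq]
    have h4 : (0:ℝ) ≤ v0 - B t₀ := by
      simp only [hBdef]; linarith [hB0]
    calc (0:ℝ) ≤ v0 - B t₀ := h4
      _ = w (t₀, Int.fract x₀) := h3.symm
      _ ≤ w (ts, xs) := h2
  -- rule out ts = a
  have htsa : a < ts := by
    rcases lt_or_eq_of_le htsI.1 with h | h
    · exact h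
    · exfalso
      have h1 : (ts, xs) ∈ K₀ := ⟨⟨by rw [← h]; exact ha1.le, htsI.2⟩, hxsI⟩
      have h2 : F (ts, xs) ((0:ℝ),(1:ℝ)) ≤ C := hC _ h1
      have h3 : B ts = (σ * δ)⁻¹ + ε := by
        simp only [hBdef, ← h, hadef]
        norm_num
      have h4 : w (ts, xs) < 0 := by
        simp only [hwdef, h3]
        linarith [hBa]
      linarith [hw0]
  have htst₁ : t₁ < ts := lt_trans ha1 htsa
  -- global max in x
  have hgmax : ∀ y : ℝ, deriv (u ts) y ≤ deriv (u ts) xs := by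
    intro y
    have h1 : Int.fract y ∈ Set.Icc (0:ℝ) 1 := ⟨Int.fract_nonneg y, (Int.fract_lt_one y).le⟩
    have h2 : (ts, Int.fract y) ∈ K := ⟨htsI, h1⟩
    have h3 := hmax h2
    have h4 : F (ts, Int.fract y) ((0:ℝ),(1:ℝ)) = F (ts, y) ((0:ℝ),(1:ℝ)) := by
      have h5 := (hper htsΩ).sub_int_mul_eq (x := y) ⌊y⌋
      have h6 : y - (⌊y⌋ : ℝ) * 1 = Int.fract y := by rw [mul_one]; rfl
      rw [h6] at h5
      exact h5
    have h7 : F (ts, y) ((0:ℝ),(1:ℝ)) ≤ F (ts, xs) ((0:ℝ),(1:ℝ)) := by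
      have := h3
      simp only [hwdef, Set.mem_setOf_eq] at this
      rw [← h4]
      linarith
    rw [hvx htsΩ, hvx htsΩ]
    exact h7
  -- smoothness of slice at ts
  have honeinf : (1 : WithTop ℕ∞) ≤ ∞S := by exact_mod_cast ((by simp) : (1:ℕ∞) ≤ ⊤)
  have hgC : ContDiff ℝ ∞S (u ts) := (hut htsΩ).of_le (by simp)
  have hg1C : ContDiff ℝ ∞S (deriv (u ts)) := (contDiff_infty_iff_deriv.1 hgC).2
  have hg2C : ContDiff ℝ ∞S (deriv (deriv (u ts))) := (contDiff_infty_iff_deriv.1 hg1C).2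
  have hfC : ContDiff ℝ ∞S f := hf.smooth.of_le (by simp)
  have hdfC : ContDiff ℝ ∞S (deriv f) := (contDiff_infty_iff_deriv.1 hfC).2
  -- second derivative data
  have hFd : HasFDerivAt F (fderiv ℝ F (ts, xs)) (ts, xs) :=
    (((hUat (x := xs) htsΩ).fderiv_right (m := 1) (by exact WithTop.coe_le_coe.2 (le_top : ((1 + 1 : ℕ) : ℕ∞) ≤ ⊤))).differentiableAt one_ne_zero).hasFDerivAt
  set G := fderiv ℝ F (ts, xs) with hGdef
  have hdt : HasDerivAt (fun s => F (s, xs) ((0:ℝ),(1:ℝ))) (G ((1:ℝ),(0:ℝ)) ((0:ℝ),(1:ℝ))) ts := by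
    have h1 : HasDerivAt (fun s : ℝ => (s, xs)) ((1:ℝ),(0:ℝ)) ts :=
      (hasDerivAt_id ts).prodMk (hasDerivAt_const ts xs)
    have h2 : HasDerivAt (fun s => F (s, xs)) (G ((1:ℝ),(0:ℝ))) ts :=
      hFd.comp_hasDerivAt ts h1
    exact (ContinuousLinearMap.apply ℝ ℝ ((0:ℝ),(1:ℝ))).hasFDerivAt.comp_hasDerivAt ts h2
  have hdx : HasDerivAt (fun y => F (ts, y) ((1:ℝ),(0:ℝ))) (G ((0:ℝ),(1:ℝ)) ((1:ℝ),(0:ℝ))) xs := by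
    have h1 : HasDerivAt (fun y : ℝ => (ts, y)) ((0:ℝ),(1:ℝ)) xs :=
      (hasDerivAt_const xs ts).prodMk (hasDerivAt_id xs)
    have h2 : HasDerivAt (fun y => F (ts, y)) (G ((0:ℝ),(1:ℝ))) xs :=
      hFd.comp_hasDerivAt xs h1
    exact (ContinuousLinearMap.apply ℝ ℝ ((1:ℝ),(0:ℝ))).hasFDerivAt.comp_hasDerivAt xs h2
  have hsymm : G ((1:ℝ),(0:ℝ)) ((0:ℝ),(1:ℝ)) = G ((0:ℝ),(1:ℝ)) ((1:ℝ),(0:ℝ)) := by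
    have hev : ∀ᶠ q in 𝓝 (ts, xs), HasFDerivAt U (F q) q := by
      filter_upwards [hOpen.mem_nhds (⟨htsΩ, Set.mem_univ xs⟩ :
        (ts, xs) ∈ Set.Ioo (0:ℝ) T ×ˢ Set.univ)] with q hq
      exact hUdiff q hq.1
    exact second_derivative_symmetric_of_eventually hev hFd _ _
  -- compute the space derivative of the PDE right-hand side
  have hfun : (fun y => F (ts, y) ((1:ℝ),(0:ℝ))) =
      (fun y => ν * deriv (deriv (u ts)) y - deriv f (u ts y) * deriv (u ts) y) :=
    funext (hPDE htsΩ)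
  set vv := deriv (u ts) xs with hvvdef
  have hA1 : HasDerivAt (fun y => ν * deriv (deriv (u ts)) y)
      (ν * deriv (deriv (deriv (u ts))) xs) xs :=
    (((hg2C.differentiable (by simp)) xs).hasDerivAt).const_mul ν
  have hA2 : HasDerivAt (fun y => deriv f (u ts y))
      (deriv (deriv f) (u ts xs) * deriv (u ts) xs) xs := by
    have h1 : HasDerivAt (deriv f) (deriv (deriv f) (u ts xs)) (u ts xs) :=
      ((hdfC.differentiable (by simp)) (u ts xs)).hasDerivAt
    have h2 : HasDerivAt (u ts) (deriv (u ts) xs) xs :=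
      ((hgC.differentiable (by simp)) xs).hasDerivAt
    exact h1.comp xs h2
  have hA3 : HasDerivAt (deriv (u ts)) (deriv (deriv (u ts)) xs) xs :=
    ((hg1C.differentiable (by simp)) xs).hasDerivAt
  have hA4 : HasDerivAt (fun y => deriv f (u ts y) * deriv (u ts) y)
      (deriv (deriv f) (u ts xs) * deriv (u ts) xs * deriv (u ts) xs
        + deriv f (u ts xs) * deriv (deriv (u ts)) xs) xs := hA2.mul hA3
  have hA5 : HasDerivAt (fun y => ν * deriv (deriv (u ts)) y - deriv f (u ts y) * deriv (u ts) y)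
      (ν * deriv (deriv (deriv (u ts))) xs
        - (deriv (deriv f) (u ts xs) * deriv (u ts) xs * deriv (u ts) xs
          + deriv f (u ts xs) * deriv (deriv (u ts)) xs)) xs := hA1.sub hA4
  have heqG : G ((0:ℝ),(1:ℝ)) ((1:ℝ),(0:ℝ)) =
      ν * deriv (deriv (deriv (u ts))) xs
        - (deriv (deriv f) (u ts xs) * vv * vv
          + deriv f (u ts xs) * deriv (deriv (u ts)) xs) := by
    rw [hfun] at hdx
    exact hdx.unique hA5
  -- max point info
  have hw2 : deriv (deriv (u ts)) xs = 0 :=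
    IsLocalMax.deriv_eq_zero (Filter.Eventually.of_forall hgmax)
  have hw3 : deriv (deriv (deriv (u ts))) xs ≤ 0 := by
    have := aux_deriv2_nonpos hg1C hgmax
    -- this : deriv (deriv (deriv (u ts))) xs ≤ 0
    exact this
  have hconv : σ ≤ deriv (deriv f) (u ts xs) := hf.strongly_convex _
  have hub : G ((1:ℝ),(0:ℝ)) ((0:ℝ),(1:ℝ)) ≤ -σ * vv ^ 2 := by
    have hσvv : σ * (vv * vv) ≤ deriv (deriv f) (u ts xs) * vv * vv := by
      have h9 := mul_le_mul_of_nonneg_right hconv (mul_self_nonneg vv)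
      calc σ * (vv * vv) = σ * (vv * vv) := rfl
        _ ≤ deriv (deriv f) (u ts xs) * (vv * vv) := h9
        _ = deriv (deriv f) (u ts xs) * vv * vv := by ring
    have hν3 : ν * deriv (deriv (deriv (u ts))) xs ≤ 0 :=
      mul_nonpos_of_nonneg_of_nonpos hν0.le hw3
    rw [hsymm, heqG, hw2]
    have hvv2 : vv ^ 2 = vv * vv := sq vv
    linarith [hσvv, hν3]
  -- time comparison
  set c := (σ * (ts - t₁))⁻¹ with hcdef
  have hcc : 0 < σ * (ts - t₁) := mul_pos hσ (by linarith)
  have hcpos : 0 < c := inv_pos.2 hcc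
  have hBd : HasDerivAt B (-σ * c ^ 2) ts := by
    have h1 : HasDerivAt (fun t : ℝ => σ * (t - t₁)) σ ts := by
      simpa using (((hasDerivAt_id ts).sub_const t₁).const_mul σ)
    have h2 : HasDerivAt (fun t : ℝ => (σ * (t - t₁))⁻¹) (-σ / (σ * (ts - t₁)) ^ 2) ts :=
      h1.inv hcc.ne'
    have h3 : -σ / (σ * (ts - t₁)) ^ 2 = -σ * c ^ 2 := by
      rw [hcdef, div_eq_mul_inv, ← inv_pow]
    have h4 := h2.add_const ε
    rw [h3] at h4
    exact h4
  have hψd : HasDerivAt (fun s => F (s, xs) ((0:ℝ),(1:ℝ)) - B s)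
      (G ((1:ℝ),(0:ℝ)) ((0:ℝ),(1:ℝ)) - (-σ * c ^ 2)) ts := hdt.sub hBd
  have hψle : ∀ s ∈ Set.Ico a ts, F (s, xs) ((0:ℝ),(1:ℝ)) - B s
      ≤ F (ts, xs) ((0:ℝ),(1:ℝ)) - B ts := by
    intro s hs
    have h1 : (s, xs) ∈ K := ⟨⟨hs.1, le_trans hs.2.le htsI.2⟩, hxsI⟩
    exact hmax h1
  have hlb : 0 ≤ G ((1:ℝ),(0:ℝ)) ((0:ℝ),(1:ℝ)) - (-σ * c ^ 2) :=
    aux_deriv_nonneg_left htsa hψd hψle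
  -- final contradiction
  have hvvge : c + ε ≤ vv := by
    have h1 : w (ts, xs) = F (ts, xs) ((0:ℝ),(1:ℝ)) - B ts := rfl
    have h2 : B ts = c + ε := rfl
    have h3 : F (ts, xs) ((0:ℝ),(1:ℝ)) = vv := (hvx htsΩ).symm
    rw [h1, h3, h2] at hw0
    linarith
  have hchain : σ * vv ^ 2 ≤ σ * c ^ 2 := by linarith [hub, hlb]
  have hvvc : c < vv := by linarith
  have hsq : c ^ 2 < vv ^ 2 := by
    have := pow_lt_pow_left₀ hvvc hcpos.le (n := 2) (by norm_num)
    exact this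
  have hfin : σ * c ^ 2 < σ * vv ^ 2 := (mul_lt_mul_iff_right₀ hσ).2 hsq
  linarith

end
end

section
/- Let u be a classical solution, smooth in both variables and with zero mean value in x, of the generalised Burgers equation u_t + f'(u) u_x − ν u_xx = 0 on [0,T] × S¹. Then for every t ∈ [0,T], max_{x ∈ S¹} u_x(t,x) ≤ max_{x ∈ S¹} u_x(0,x); i.e. the maximum over x of the space derivative u_x is non-increasing in time. -/
open MeasureTheory Real Set Filter
open scoped ENNReal Topology

noncomputable section

/-- A periodic function with period 1 agrees with its value at the fractional part. -/
private lemma periodic_fract_eq {g : ℝ → ℝ} (hg : Function.Periodic g 1) (x : ℝ) :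
    g (Int.fract x) = g x := by
  have := hg.sub_int_mul_eq (x := x) ⌊x⌋
  simpa [Int.self_sub_floor] using this

/-- The derivative of a periodic function is periodic. -/
private lemma periodic_deriv' {g : ℝ → ℝ} (hg : Function.Periodic g 1) :
    Function.Periodic (deriv g) 1 := by
  intro x
  have h1 : (fun y => g (y + 1)) = g := funext hg
  calc deriv g (x + 1) = deriv (fun y => g (y + 1)) x := (deriv_comp_add_const g 1 x).symm
    _ = deriv g x := by rw [h1]

/-- If `g` has a max at the right endpoint of a nondegenerate interval, its derivative
there is nonnegative. -/
private lemma deriv_nonneg_right_max {g : ℝ → ℝ} {a b c : ℝ} (hab : a < b)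
    (hg : HasDerivAt g c b) (hmax : ∀ t ∈ Set.Icc a b, g t ≤ g b) : 0 ≤ c := by
  have hslope : Tendsto (slope g b) (𝓝[<] b) (𝓝 c) :=
    (hasDerivAt_iff_tendsto_slope.1 hg).mono_left
      (nhdsWithin_mono _ (fun x hx => ne_of_lt hx))
  refine ge_of_tendsto hslope ?_
  filter_upwards [Ioo_mem_nhdsLT_of_mem (⟨hab, le_refl b⟩ : b ∈ Set.Ioc a b)] with t ht
  have h2 : g t ≤ g b := hmax t ⟨ht.1.le, ht.2.le⟩
  have h3 : t - b < 0 := sub_neg.2 ht.2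
  rw [slope_def_field]
  exact div_nonneg_of_nonpos (by linarith) h3.le

/-- At a global max of a smooth function, the second derivative is nonpositive. -/
private lemma deriv2_nonpos_max {h : ℝ → ℝ} {x0 : ℝ} (hh : ContDiff ℝ ((⊤:ℕ∞):WithTop ℕ∞) h)
    (hmax : ∀ y, h y ≤ h x0) : deriv (deriv h) x0 ≤ 0 := by
  by_contra hc
  push_neg at hc
  have hlm : IsLocalMax h x0 := Filter.Eventually.of_forall hmax
  have h10 : deriv h x0 = 0 := hlm.deriv_eq_zero
  have hh1 : ContDiff ℝ ((⊤:ℕ∞):WithTop ℕ∞) (deriv h) := (contDiff_infty_iff_deriv.mp hh).2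
  have hd : HasDerivAt (deriv h) (deriv (deriv h) x0) x0 :=
    (hh1.differentiable (by simp) x0).hasDerivAt
  have hslope : Tendsto (slope (deriv h) x0) (𝓝[>] x0) (𝓝 (deriv (deriv h) x0)) :=
    (hasDerivAt_iff_tendsto_slope.1 hd).mono_left
      (nhdsWithin_mono _ (fun x hx => ne_of_gt hx))
  have hev : ∀ᶠ t in 𝓝[>] x0, 0 < slope (deriv h) x0 t :=
    hslope.eventually (eventually_gt_nhds hc)
  have hev2 : ∀ᶠ t in 𝓝[>] x0, 0 < deriv h t := by
    filter_upwards [hev, self_mem_nhdsWithin] with t ht ht2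
    have h3 : (0:ℝ) < t - x0 := sub_pos.2 ht2
    rw [slope_def_field, h10, sub_zero] at ht
    have := mul_pos ht h3
    rwa [div_mul_cancel₀ _ (ne_of_gt h3)] at this
  obtain ⟨b, hb, hsub⟩ := mem_nhdsGT_iff_exists_Ioo_subset.1 hev2
  have hmono : StrictMonoOn h (Set.Ico x0 b) := by
    refine strictMonoOn_of_deriv_pos (convex_Ico x0 b) hh.continuous.continuousOn ?_
    intro y hy
    rw [interior_Ico] at hy
    exact hsub hy
  have hx0b : x0 < (x0 + b) / 2 := by simp only [Set.mem_Ioi] at hb; linarith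
  have hmid : (x0 + b) / 2 < b := by simp only [Set.mem_Ioi] at hb; linarith
  have := hmono (Set.left_mem_Ico.2 (lt_trans hx0b hmid)) ⟨hx0b.le, hmid⟩ hx0b
  exact absurd (hmax ((x0 + b) / 2)) (not_le.2 this)


/-- For a classical, space-periodic, zero mean value solution of the
unforced generalised Burgers equation on `[0,T] × S¹`, the maximum over `x` of the
space derivative `u_x(t,·)` at any time `t ∈ [0,T]` is at most its value at time `0`. -/
theorem statement2
    (f : ℝ → ℝ) (σ ν T : ℝ) (hf : BurgersFlux f σ) (hν : ν ∈ Set.Ioc (0:ℝ) 1)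
    (hT0 : 0 ≤ T) (u : ℝ → ℝ → ℝ)
    (hsm : ContDiffOn ℝ (⊤ : ℕ∞) (fun q : ℝ × ℝ => u q.1 q.2) (Set.Icc (0:ℝ) T ×ˢ Set.univ))
    (hx : ∀ t ∈ Set.Icc (0:ℝ) T, ZeroMeanPeriodic (u t))
    (heq : SolvesBurgers f ν u (Set.Ioo 0 T)) :
    ∀ t ∈ Set.Icc (0:ℝ) T,
      sSup (Set.range (deriv (u t))) ≤ sSup (Set.range (deriv (u 0))) := by
  intro t ht
  rcases eq_or_lt_of_le hT0 with hT | hT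
  · -- degenerate case T = 0
    have ht0 : t = 0 := le_antisymm (hT ▸ ht.2) ht.1
    rw [ht0]
  -- now 0 < T
  set F : ℝ × ℝ → ℝ := fun q => u q.1 q.2 with hFdef
  set s : Set (ℝ × ℝ) := Set.Icc (0:ℝ) T ×ˢ (Set.univ : Set ℝ) with hsdef
  have hsu : UniqueDiffOn ℝ s := (uniqueDiffOn_Icc hT).prod uniqueDiffOn_univ
  set V : ℝ × ℝ → (ℝ × ℝ →L[ℝ] ℝ) := fderivWithin ℝ F s with hVdef
  have hone : (1 : WithTop ℕ∞) ≤ ((⊤ : ℕ∞) : WithTop ℕ∞) := by exact_mod_cast (le_top : (1:ℕ∞) ≤ ⊤)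
  have hVc : ContinuousOn V s := hsm.continuousOn_fderivWithin hsu hone
  -- the spatial derivative of u t' equals V applied to (0,1)
  have hsec : ∀ t' ∈ Set.Icc (0:ℝ) T, ∀ x : ℝ, HasDerivAt (u t') (V (t', x) (0, 1)) x := by
    intro t' ht' x
    have hmem : ((t', x) : ℝ × ℝ) ∈ s := ⟨ht', Set.mem_univ x⟩
    have hFW : HasFDerivWithinAt F (V (t', x)) s (t', x) :=
      ((hsm.differentiableOn (by simp)) _ hmem).hasFDerivWithinAt
    have hsec1 : HasFDerivAt (fun y : ℝ => ((t', y) : ℝ × ℝ))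
        ((0 : ℝ →L[ℝ] ℝ).prod (ContinuousLinearMap.id ℝ ℝ)) x :=
      HasFDerivAt.prodMk (hasFDerivAt_const t' x) (hasFDerivAt_id x)
    have hmaps : Set.MapsTo (fun y : ℝ => ((t', y) : ℝ × ℝ)) Set.univ s :=
      fun y _ => ⟨ht', Set.mem_univ y⟩
    have hcomp := hFW.comp (E := ℝ) x (hsec1.hasFDerivWithinAt) hmaps
    rw [hasFDerivWithinAt_univ] at hcomp
    have := hcomp.hasDerivAt
    exact this
  have hvV : ∀ t' ∈ Set.Icc (0:ℝ) T, ∀ x : ℝ, deriv (u t') x = V (t', x) (0, 1) :=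
    fun t' ht' x => (hsec t' ht' x).deriv
  -- the supremum at time 0
  set M0 : ℝ := sSup (Set.range (deriv (u 0))) with hM0def
  have h0mem : (0:ℝ) ∈ Set.Icc (0:ℝ) T := ⟨le_refl 0, hT0⟩
  have hper : ∀ t' ∈ Set.Icc (0:ℝ) T, Function.Periodic (deriv (u t')) 1 :=
    fun t' ht' => periodic_deriv' (hx t' ht').periodic
  have hbdd : BddAbove (Set.range (deriv (u 0))) := by
    have hcont0 : Continuous (deriv (u 0)) :=
      ((hx 0 h0mem).smooth.of_le hone).continuous_deriv le_rfl
    have hsub : Set.range (deriv (u 0)) ⊆ deriv (u 0) '' Set.Icc (0:ℝ) 1 := by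
      rintro y ⟨x, rfl⟩
      exact ⟨Int.fract x, ⟨(Int.fract_nonneg x), (Int.fract_lt_one x).le⟩,
        periodic_fract_eq (hper 0 h0mem) x⟩
    exact (isCompact_Icc.bddAbove_image hcont0.continuousOn).mono hsub
  have hle0 : ∀ x : ℝ, deriv (u 0) x ≤ M0 := fun x => le_csSup hbdd (Set.mem_range_self x)
  -- MAIN CLAIM 1 : the ε-perturbed maximum principle for times strictly inside (0,T)
  have claim1 : ∀ t₁ ∈ Set.Ioo (0:ℝ) T, ∀ ε > (0:ℝ), ∀ x : ℝ,
      deriv (u t₁) x ≤ M0 + ε * t₁ := by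
    intro t₁ ht₁ ε hε x
    set g : ℝ × ℝ → ℝ := fun q => V q (0, 1) - ε * q.1 with hgdef
    set K : Set (ℝ × ℝ) := Set.Icc (0:ℝ) t₁ ×ˢ Set.Icc (0:ℝ) 1 with hKdef
    have hKs : K ⊆ s := Set.prod_mono (Set.Icc_subset_Icc le_rfl ht₁.2.le) (Set.subset_univ _)
    have hKc : IsCompact K := isCompact_Icc.prod isCompact_Icc
    have hKne : K.Nonempty := ⟨(0, 0), ⟨⟨le_refl 0, ht₁.1.le⟩, ⟨le_refl 0, zero_le_one⟩⟩⟩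
    have hgc : ContinuousOn g K :=
      ((hVc.mono hKs).clm_apply continuousOn_const).sub
        (continuousOn_const.mul continuous_fst.continuousOn)
    obtain ⟨qs, hqsK, hqmax⟩ := hKc.exists_isMaxOn hKne hgc
    obtain ⟨ts, xs⟩ := qs
    have hts0 : (0:ℝ) ≤ ts := hqsK.1.1
    have hkey : g (ts, xs) ≤ M0 := by
      rcases eq_or_lt_of_le hts0 with h0 | h0
      · -- max attained at time 0
        have : g (ts, xs) = deriv (u 0) xs := by
          rw [hgdef]
          simp only [← h0]
          rw [← hvV 0 h0mem xs]
          ring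
        rw [this]; exact hle0 xs
      · -- max attained at positive time : contradiction with the equation
        exfalso
        have htsT : ts < T := lt_of_le_of_lt hqsK.1.2 ht₁.2
        set O : Set (ℝ × ℝ) := Set.Ioo (0:ℝ) T ×ˢ (Set.univ : Set ℝ) with hOdef
        have hOopen : IsOpen O := isOpen_Ioo.prod isOpen_univ
        have hOs : O ⊆ s := Set.prod_mono Set.Ioo_subset_Icc_self (Set.subset_univ _)
        have hnhds : ∀ q ∈ O, s ∈ 𝓝 q :=
          fun q hq => Filter.mem_of_superset (hOopen.mem_nhds hq) hOs
        have hqsO : ((ts, xs) : ℝ × ℝ) ∈ O := ⟨⟨h0, htsT⟩, Set.mem_univ _⟩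
        set W : ℝ × ℝ → (ℝ × ℝ →L[ℝ] ℝ) := fderiv ℝ F with hWdef
        have hFd : ∀ q ∈ O, HasFDerivAt F (W q) q := fun q hq =>
          ((hsm.contDiffAt (hnhds q hq)).differentiableAt (by simp)).hasFDerivAt
        have hWsm : ContDiffAt ℝ (⊤ : ℕ∞) W (ts, xs) :=
          (hsm.contDiffAt (hnhds _ hqsO)).fderiv_right (by simp)
        set W' : ℝ × ℝ →L[ℝ] (ℝ × ℝ →L[ℝ] ℝ) := fderiv ℝ W (ts, xs) with hW'def
        have hW' : HasFDerivAt W W' (ts, xs) :=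
          (hWsm.differentiableAt (by simp)).hasFDerivAt
        have hev : ∀ᶠ q in 𝓝 ((ts, xs) : ℝ × ℝ), HasFDerivAt F (W q) q := by
          filter_upwards [hOopen.mem_nhds hqsO] with q hq using hFd q hq
        have hsymm : W' (1, 0) (0, 1) = W' (0, 1) (1, 0) :=
          second_derivative_symmetric_of_eventually hev hW' _ _
        -- time-direction derivative of the linearly perturbed gradient
        have hsecT : HasFDerivAt (fun r : ℝ => ((r, xs) : ℝ × ℝ))
            ((ContinuousLinearMap.id ℝ ℝ).prod 0) ts :=
          HasFDerivAt.prodMk (hasFDerivAt_id ts) (hasFDerivAt_const xs ts)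
        have happ : HasDerivAt (fun r : ℝ => W (r, xs) (0, 1)) (W' (1, 0) (0, 1)) ts := by
          have h1 := hW'.comp ts hsecT
          have h2 := ((ContinuousLinearMap.apply ℝ ℝ ((0:ℝ), (1:ℝ))).hasFDerivAt).comp ts h1
          have h3 := h2.hasDerivAt
          exact h3
        have hεD : HasDerivAt (fun r : ℝ => ε * r) ε ts := by
          simpa using (hasDerivAt_id ts).const_mul ε
        have hVW : (fun r : ℝ => V (r, xs) (0, 1) - ε * r)
            =ᶠ[𝓝 ts] (fun r : ℝ => W (r, xs) (0, 1) - ε * r) := by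
          filter_upwards [isOpen_Ioo.mem_nhds (⟨h0, htsT⟩ : ts ∈ Set.Ioo (0:ℝ) T)] with r hr
          have hmem : s ∈ 𝓝 ((r, xs) : ℝ × ℝ) := hnhds _ ⟨hr, Set.mem_univ _⟩
          rw [hVdef, hWdef, fderivWithin_of_mem_nhds hmem]
        have hφ : HasDerivAt (fun r : ℝ => V (r, xs) (0, 1) - ε * r)
            (W' (1, 0) (0, 1) - ε) ts := (happ.sub hεD).congr_of_eventuallyEq hVW
        have hφmax : ∀ r ∈ Set.Icc (0:ℝ) ts,
            V (r, xs) (0, 1) - ε * r ≤ V (ts, xs) (0, 1) - ε * ts := by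
          intro r hr
          exact hqmax (⟨⟨hr.1, le_trans hr.2 hqsK.1.2⟩, hqsK.2⟩ : ((r, xs) : ℝ × ℝ) ∈ K)
        have hder : 0 ≤ W' (1, 0) (0, 1) - ε := deriv_nonneg_right_max h0 hφ hφmax
        -- space-direction : global max of the spatial derivative at xs
        have htsmem : ts ∈ Set.Icc (0:ℝ) T := ⟨h0.le, htsT.le⟩
        have hU : ContDiff ℝ (⊤ : ℕ∞) (u ts) := (hx ts htsmem).smooth
        have hmaxh : ∀ y : ℝ, deriv (u ts) y ≤ deriv (u ts) xs := by
          intro y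
          have h1 : deriv (u ts) y = deriv (u ts) (Int.fract y) :=
            (periodic_fract_eq (hper ts htsmem) y).symm
          have h2 : ((ts, Int.fract y) : ℝ × ℝ) ∈ K :=
            ⟨hqsK.1, ⟨Int.fract_nonneg y, (Int.fract_lt_one y).le⟩⟩
          have h3 := hqmax h2
          simp only [Set.mem_setOf_eq, hgdef] at h3
          rw [h1, hvV ts htsmem, hvV ts htsmem]
          linarith
        have hlm : IsLocalMax (deriv (u ts)) xs := Filter.Eventually.of_forall hmaxh
        have h1st : deriv (deriv (u ts)) xs = 0 := hlm.deriv_eq_zero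
        have hUderiv : ContDiff ℝ ((⊤:ℕ∞) : WithTop ℕ∞) (deriv (u ts)) :=
          (contDiff_infty_iff_deriv.mp (hU.of_le (by simp))).2
        have h2nd : deriv (deriv (deriv (u ts))) xs ≤ 0 := deriv2_nonpos_max hUderiv hmaxh
        -- time partial derivative of u
        have hP : ∀ y : ℝ, HasDerivAt (fun r : ℝ => u r y) (W (ts, y) (1, 0)) ts := by
          intro y
          have hm : ((ts, y) : ℝ × ℝ) ∈ O := ⟨⟨h0, htsT⟩, Set.mem_univ _⟩
          have h1 := (hFd _ hm).comp ts
            (HasFDerivAt.prodMk (hasFDerivAt_id ts) (hasFDerivAt_const y ts) :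
              HasFDerivAt (fun r : ℝ => ((r, y) : ℝ × ℝ)) ((ContinuousLinearMap.id ℝ ℝ).prod 0) ts)
          have h2 := h1.hasDerivAt
          exact h2
        have hQ : ∀ y : ℝ, W (ts, y) (1, 0)
            = ν * deriv (deriv (u ts)) y - deriv f (u ts y) * deriv (u ts) y := by
          intro y
          have he := heq ts ⟨h0, htsT⟩ y
          have h1 : deriv (fun r : ℝ => u r y) ts = W (ts, y) (1, 0) := (hP y).deriv
          rw [h1] at he
          linarith
        -- spatial derivative of the time partial
        have hsecX : HasFDerivAt (fun y : ℝ => ((ts, y) : ℝ × ℝ))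
            ((0 : ℝ →L[ℝ] ℝ).prod (ContinuousLinearMap.id ℝ ℝ)) xs :=
          HasFDerivAt.prodMk (hasFDerivAt_const ts xs) (hasFDerivAt_id xs)
        have hχ : HasDerivAt (fun y : ℝ => W (ts, y) (1, 0)) (W' (0, 1) (1, 0)) xs := by
          have h1 := hW'.comp xs hsecX
          have h2 := ((ContinuousLinearMap.apply ℝ ℝ ((1:ℝ), (0:ℝ))).hasFDerivAt).comp xs h1
          have h3 := h2.hasDerivAt
          exact h3
        have hfuneq : (fun y : ℝ => W (ts, y) (1, 0))
            = fun y : ℝ => ν * deriv (deriv (u ts)) y - deriv f (u ts y) * deriv (u ts) y :=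
          funext hQ
        rw [hfuneq] at hχ
        -- direct computation of the same derivative
        have hU' : ContDiff ℝ ((⊤:ℕ∞) : WithTop ℕ∞) (u ts) := hU.of_le (by simp)
        have hUd2 : ContDiff ℝ ((⊤:ℕ∞) : WithTop ℕ∞) (deriv (deriv (u ts))) :=
          (contDiff_infty_iff_deriv.mp hUderiv).2
        have hfd : ContDiff ℝ ((⊤:ℕ∞) : WithTop ℕ∞) (deriv f) :=
          (contDiff_infty_iff_deriv.mp (hf.smooth.of_le (by simp))).2
        have hone' : (1 : ℕ∞) ≤ (⊤ : ℕ∞) := le_top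
        have hr : HasDerivAt
            (fun y : ℝ => ν * deriv (deriv (u ts)) y - deriv f (u ts y) * deriv (u ts) y)
            (ν * deriv (deriv (deriv (u ts))) xs
              - (deriv (deriv f) (u ts xs) * deriv (u ts) xs * deriv (u ts) xs
                 + deriv f (u ts xs) * deriv (deriv (u ts)) xs)) xs := by
          have h1 : HasDerivAt (deriv (deriv (u ts))) (deriv (deriv (deriv (u ts))) xs) xs :=
            (hUd2.differentiable (by simp) xs).hasDerivAt
          have h2 : HasDerivAt (u ts) (deriv (u ts) xs) xs :=
            (hU'.differentiable (by simp) xs).hasDerivAt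
          have h4 : HasDerivAt (deriv f) (deriv (deriv f) (u ts xs)) (u ts xs) :=
            (hfd.differentiable (by simp) (u ts xs)).hasDerivAt
          have h3 : HasDerivAt (fun y : ℝ => deriv f (u ts y))
              (deriv (deriv f) (u ts xs) * deriv (u ts) xs) xs := h4.comp xs h2
          have h5 : HasDerivAt (deriv (u ts)) (deriv (deriv (u ts)) xs) xs :=
            (hUderiv.differentiable (by simp) xs).hasDerivAt
          exact (h1.const_mul ν).sub (h3.mul h5)
        have hcc : W' (0, 1) (1, 0)
            = ν * deriv (deriv (deriv (u ts))) xs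
              - (deriv (deriv f) (u ts xs) * deriv (u ts) xs * deriv (u ts) xs
                 + deriv f (u ts xs) * deriv (deriv (u ts)) xs) := hχ.unique hr
        -- assemble the contradiction
        have hεle : ε ≤ W' (1, 0) (0, 1) := by linarith
        rw [hsymm, hcc, h1st] at hεle
        have hσ : σ ≤ deriv (deriv f) (u ts xs) := hf.strongly_convex _
        have hsq : (0:ℝ) ≤ deriv (deriv f) (u ts xs) * deriv (u ts) xs * deriv (u ts) xs := by
          have := mul_nonneg (le_trans hf.sigma_pos.le hσ) (mul_self_nonneg (deriv (u ts) xs))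
          linarith [this, mul_assoc (deriv (deriv f) (u ts xs)) (deriv (u ts) xs) (deriv (u ts) xs)]
        have hν3 : ν * deriv (deriv (deriv (u ts))) xs ≤ 0 :=
          mul_nonpos_of_nonneg_of_nonpos hν.1.le h2nd
        rw [mul_zero, add_zero] at hεle
        linarith
    -- use periodicity to bound the derivative at every x by the max over K
    have ht₁mem : t₁ ∈ Set.Icc (0:ℝ) T := ⟨ht₁.1.le, ht₁.2.le⟩
    have h1 : deriv (u t₁) x = deriv (u t₁) (Int.fract x) :=
      (periodic_fract_eq (hper t₁ ht₁mem) x).symm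
    have h2 : ((t₁, Int.fract x) : ℝ × ℝ) ∈ K :=
      ⟨⟨ht₁.1.le, le_refl t₁⟩, ⟨Int.fract_nonneg x, (Int.fract_lt_one x).le⟩⟩
    have h3 := le_trans (hqmax h2) hkey
    rw [hgdef] at h3
    simp only at h3
    rw [h1, hvV t₁ ht₁mem]
    linarith
  -- from claim1 to the bound for all interior times
  have hIoo : ∀ t' ∈ Set.Ioo (0:ℝ) T, ∀ x : ℝ, deriv (u t') x ≤ M0 := by
    intro t' ht' x
    refine le_of_forall_pos_le_add (fun ε' hε' => ?_)
    have h1 := claim1 t' ht' (ε' / t') (div_pos hε' ht'.1) x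
    have h2 : ε' / t' * t' = ε' := div_mul_cancel₀ ε' (ne_of_gt ht'.1)
    linarith
  -- the endpoint t = T by continuity
  have hTx : ∀ x : ℝ, deriv (u T) x ≤ M0 := by
    intro x
    have hmaps : Set.MapsTo (fun r : ℝ => ((r, x) : ℝ × ℝ)) (Set.Icc (0:ℝ) T) s :=
      fun r hr => ⟨hr, Set.mem_univ x⟩
    have hc1 : ContinuousOn (fun r : ℝ => V (r, x)) (Set.Icc (0:ℝ) T) :=
      hVc.comp (Continuous.continuousOn (by fun_prop)) hmaps
    have hc2 : ContinuousOn (fun r : ℝ => V (r, x) (0, 1)) (Set.Icc (0:ℝ) T) :=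
      hc1.clm_apply continuousOn_const
    have hcw : ContinuousWithinAt (fun r : ℝ => V (r, x) (0, 1)) (Set.Icc (0:ℝ) T) T :=
      hc2.continuousWithinAt ⟨hT0, le_refl T⟩
    have hne : (𝓝[Set.Ioo (0:ℝ) T] T).NeBot := by
      apply mem_closure_iff_nhdsWithin_neBot.mp
      rw [closure_Ioo (ne_of_lt hT)]
      exact ⟨hT0, le_refl T⟩
    have htd : Tendsto (fun r : ℝ => V (r, x) (0, 1)) (𝓝[Set.Ioo (0:ℝ) T] T)
        (𝓝 (V (T, x) (0, 1))) :=
      hcw.mono_left (nhdsWithin_mono _ Set.Ioo_subset_Icc_self)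
    have hbound : ∀ᶠ r in 𝓝[Set.Ioo (0:ℝ) T] T, (fun r : ℝ => V (r, x) (0, 1)) r ≤ M0 := by
      filter_upwards [self_mem_nhdsWithin] with r hr
      have := hIoo r hr x
      rwa [hvV r ⟨hr.1.le, hr.2.le⟩ x] at this
    have := le_of_tendsto htd hbound
    rwa [hvV T ⟨hT0, le_refl T⟩ x]
  -- assemble
  have hmain : ∀ x : ℝ, deriv (u t) x ≤ M0 := by
    intro x
    rcases eq_or_lt_of_le ht.1 with h0 | h0
    · rw [← h0]; exact hle0 x
    rcases eq_or_lt_of_le ht.2 with hTt | hTt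
    · rw [hTt]; exact hTx x
    exact hIoo t ⟨h0, hTt⟩ x
  exact csSup_le (Set.range_nonempty _) (by rintro y ⟨x, rfl⟩; exact hmain x)

end
end

section
/- Let u be a solution of the kick-forced generalised Burgers equation. Then u_x(t,x) ≤ 2σ⁻¹ for all t ∈ [k + 1/2, k + 1) with k ∈ ℕ and all x ∈ S¹, where σ > 0 is the strong convexity constant of f. This bound holds pointwise, for almost every realisation of the kicks, and does not depend on the initial condition u₀, on ν, or on k. -/
open MeasureTheory Real Set Filter
open scoped ENNReal Topology

noncomputable section

/-- The kick-forced setting: `(Ω, P)` is a probability space, `(ζ i)_{i ≥ 1}` are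
i.i.d. kicks (smooth, `1`-periodic, zero space-mean, nontrivial, with finite exponential
moments of all Sobolev norms and zero expected value), and `ω ↦ u ω` is, for a.e. `ω`,
the solution of `u_t + f'(u) u_x - ν u_xx = Σ_{i ≥ 1} δ_{t = i} ζ_i` with smooth zero
mean value initial condition `u₀`: it is right-continuous in time, solves the unforced
equation classically on every interval `(i, i+1)`, and jumps by `ζ i` at time `i ≥ 1`. -/
structure KickSetup {Ω : Type} [MeasurableSpace Ω] (P : Measure Ω)
    (f : ℝ → ℝ) (σ ν : ℝ) (ζ : ℕ → Ω → ℝ → ℝ)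
    (u₀ : ℝ → ℝ) (u : Ω → ℝ → ℝ → ℝ) : Prop where
  prob : IsProbabilityMeasure P
  flux : BurgersFlux f σ
  nu_mem : ν ∈ Set.Ioc (0:ℝ) 1
  kicks_meas : ∀ i, Measurable (ζ i)
  kicks_smooth : ∀ i, 1 ≤ i → ∀ ω, ZeroMeanPeriodic (ζ i ω)
  kicks_indep : ProbabilityTheory.iIndepFun ζ P
  kicks_ident : ∀ i j, 1 ≤ i → 1 ≤ j → ProbabilityTheory.IdentDistrib (ζ i) (ζ j) P P
  kicks_nontrivial : P {ω | ζ 1 ω = fun _ => (0:ℝ)} < 1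
  kicks_exp_moment : ∀ m : ℕ, ∃ α : ℝ, 0 < α ∧ ∃ β : ℝ,
    ∀ i, 1 ≤ i → ∫ ω, Real.exp (α * (hNorm m (ζ i ω)) ^ 2) ∂P ≤ β
  kicks_mean_zero : ∀ i, 1 ≤ i → ∀ x : ℝ, ∫ ω, ζ i ω x ∂P = 0
  init_smooth : ZeroMeanPeriodic u₀
  init : ∀ ω, u ω 0 = u₀
  sol_space : ∀ ω, ∀ t : ℝ, 0 ≤ t → ZeroMeanPeriodic (u ω t)
  sol_smooth : ∀ ω, ∀ i : ℕ,
    ContDiffOn ℝ (⊤ : ℕ∞) (fun q : ℝ × ℝ => u ω q.1 q.2) (Set.Ioo (i:ℝ) (i+1) ×ˢ Set.univ)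
  sol_eq : ∀ ω, ∀ i : ℕ, SolvesBurgers f ν (u ω) (Set.Ioo (i:ℝ) (i+1))
  sol_right_cont : ∀ ω, ∀ x : ℝ, ∀ t : ℝ, 0 ≤ t →
    ContinuousWithinAt (fun s => u ω s x) (Set.Ici t) t
  sol_kick : ∀ ω, ∀ x : ℝ, ∀ i : ℕ, 1 ≤ i → ∃ L : ℝ,
    Filter.Tendsto (fun s => u ω s x) (nhdsWithin (i:ℝ) (Set.Iio (i:ℝ))) (nhds L) ∧
    u ω (i:ℝ) x = L + ζ i ω x

set_option maxHeartbeats 2000000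
-- auxiliary lemmas

lemma periodic_deriv'_s3 {f : ℝ → ℝ} (hf : Function.Periodic f 1) :
    Function.Periodic (deriv f) 1 := by
  intro x
  have : (fun y : ℝ => f (y + 1)) = f := funext fun y => hf y
  calc deriv f (x + 1) = deriv (fun y => f (y + 1)) x := by
        rw [deriv_comp_add_const]
    _ = deriv f x := by rw [this]

lemma deriv2_nonpos_of_isLocalMax {h : ℝ → ℝ} (hsm : ContDiff ℝ (↑(⊤:ℕ∞)) h) {x : ℝ}
    (hx : IsLocalMax h x) : deriv (deriv h) x ≤ 0 := by
  by_contra hpos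
  push_neg at hpos
  have hd1 : deriv h x = 0 := hx.deriv_eq_zero
  have hdh : ContDiff ℝ (↑(⊤:ℕ∞)) (deriv h) := (contDiff_infty_iff_deriv.mp hsm).2
  have hdd : HasDerivAt (deriv h) (deriv (deriv h) x) x :=
    (hdh.differentiable (by simp) x).hasDerivAt
  have hslope : Tendsto (slope (deriv h) x) (𝓝[>] x) (𝓝 (deriv (deriv h) x)) :=
    (hasDerivAt_iff_tendsto_slope.mp hdd).mono_left
      (nhdsWithin_mono x (fun z hz => ne_of_gt hz))
  have hev : ∀ᶠ z in 𝓝[>] x, 0 < deriv h z := by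
    filter_upwards [hslope.eventually (eventually_gt_nhds hpos),
      self_mem_nhdsWithin] with z hz hz'
    have hzx : 0 < z - x := sub_pos.mpr hz'
    rw [slope_def_field, hd1, sub_zero] at hz
    rcases div_pos_iff.mp hz with ⟨h1, _⟩ | ⟨_, h2⟩
    · exact h1
    · linarith
  have hev2 : ∀ᶠ z in 𝓝[>] x, h z ≤ h x :=
    (hx.filter_mono (nhdsWithin_le_nhds))
  obtain ⟨b, hb, hsub⟩ := mem_nhdsGT_iff_exists_Ioo_subset.mp (hev.and hev2)
  have hb' : x < b := hb
  set m := (x + b) / 2 with hm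
  have hxm : x < m := by simp [hm]; linarith
  have hmb : m < b := by simp [hm]; linarith
  have hmono : StrictMonoOn h (Icc x m) := by
    apply strictMonoOn_of_deriv_pos (convex_Icc x m)
      (hsm.continuous.continuousOn)
    intro z hz
    rw [interior_Icc] at hz
    exact (hsub ⟨hz.1, hz.2.trans hmb⟩).1
  have : h x < h m := hmono ⟨le_refl x, hxm.le⟩ ⟨hxm.le, le_refl m⟩ hxm
  exact absurd ((hsub ⟨hxm, hmb⟩).2) (by linarith)

lemma deriv_nonneg_of_left_max {φ : ℝ → ℝ} {d a t : ℝ} (hd : HasDerivAt φ d t)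
    (hat : a < t) (hmax : ∀ s ∈ Ioo a t, φ s ≤ φ t) : 0 ≤ d := by
  have hslope : Tendsto (slope φ t) (𝓝[<] t) (𝓝 d) :=
    (hasDerivAt_iff_tendsto_slope.mp hd).mono_left
      (nhdsWithin_mono t (fun z hz => ne_of_lt hz))
  have hev : ∀ᶠ z in 𝓝[<] t, 0 ≤ slope φ t z := by
    filter_upwards [Ioo_mem_nhdsLT_of_mem (⟨hat, le_refl t⟩ : t ∈ Ioc a t)] with z hz
    have h1 : φ z ≤ φ t := hmax z hz
    have h2 : z - t < 0 := sub_neg.mpr hz.2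
    rw [slope_def_field]
    exact div_nonneg_iff.mpr (Or.inr ⟨by linarith, h2.le⟩)
  exact ge_of_tendsto hslope hev

lemma arith_A_le {Aval fpp fp vv d2 ν σ : ℝ} (hν : 0 < ν) (hσ : 0 < σ)
    (hfpp : σ ≤ fpp) (hd2 : d2 ≤ 0)
    (heq : Aval + (fpp * vv * vv + fp * 0) - ν * d2 = 0) : Aval ≤ -σ * vv^2 := by
  nlinarith [mul_nonneg (sub_nonneg.mpr hfpp) (sq_nonneg vv), mul_nonneg hν.le (neg_nonneg.mpr hd2)]

lemma arith_contra {Aval σ gv vv : ℝ} (h1 : 0 ≤ Aval + σ * gv^2) (h2 : Aval ≤ -σ * vv^2)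
    (h3 : 0 < σ) (h4 : 0 < gv) (h5 : gv < vv) : False := by
  nlinarith [mul_pos h3 (mul_pos (sub_pos.mpr h5) (by linarith : (0:ℝ) < vv + gv))]

lemma key_bound
    {Ω : Type} (f : ℝ → ℝ) (σ ν : ℝ) (u : Ω → ℝ → ℝ → ℝ)
    (σpos : 0 < σ) (νpos : 0 < ν)
    (flux_smooth : ContDiff ℝ (⊤ : ℕ∞) f)
    (strongly_convex : ∀ x : ℝ, σ ≤ deriv (deriv f) x)
    (sol_space : ∀ ω, ∀ t : ℝ, 0 ≤ t → ContDiff ℝ (⊤ : ℕ∞) (u ω t) ∧ Function.Periodic (u ω t) 1)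
    (sol_smooth : ∀ ω, ∀ i : ℕ,
      ContDiffOn ℝ (⊤ : ℕ∞) (fun q : ℝ × ℝ => u ω q.1 q.2) (Set.Ioo (i:ℝ) (i+1) ×ˢ Set.univ))
    (sol_eq : ∀ ω, ∀ i : ℕ, ∀ t ∈ Set.Ioo (i:ℝ) (i+1), ∀ x : ℝ,
      deriv (fun s => u ω s x) t + deriv f (u ω t x) * deriv (u ω t) x
        - ν * deriv (deriv (u ω t)) x = 0) :
    ∀ ω, ∀ k : ℕ, ∀ t ∈ Set.Ico ((k:ℝ) + 1/2) ((k:ℝ) + 1), ∀ x : ℝ,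
      deriv (u ω t) x ≤ 2 * σ⁻¹ := by
  intro ω k t ht x
  obtain ⟨ht1, ht2⟩ := ht
  by_contra hcon
  push_neg at hcon
  have hk0 : (0:ℝ) ≤ (k:ℝ) := Nat.cast_nonneg k
  set U : ℝ × ℝ → ℝ := fun q => u ω q.1 q.2 with hUdef
  set O : Set (ℝ × ℝ) := Ioo (k:ℝ) ((k:ℝ)+1) ×ˢ (univ : Set ℝ) with hOdef
  have hOopen : IsOpen O := isOpen_Ioo.prod isOpen_univ
  have hU : ContDiffOn ℝ (⊤ : ℕ∞) U O := sol_smooth ω k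
  set F : ℝ × ℝ → (ℝ × ℝ →L[ℝ] ℝ) := fderiv ℝ U with hFdef
  have hmem : ∀ {s : ℝ}, s ∈ Ioo (k:ℝ) ((k:ℝ)+1) → ∀ y : ℝ, ((s, y) : ℝ × ℝ) ∈ O :=
    fun hs y => ⟨hs, mem_univ y⟩
  have hUderiv : ∀ q ∈ O, HasFDerivAt U (F q) q := fun q hq =>
    ((hU.contDiffAt (hOopen.mem_nhds hq)).differentiableAt (by simp)).hasFDerivAt
  have hx_deriv : ∀ {s : ℝ}, s ∈ Ioo (k:ℝ) ((k:ℝ)+1) → ∀ y : ℝ,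
      HasDerivAt (u ω s) (F (s, y) (0, 1)) y := by
    intro s hs y
    have hj : HasDerivAt (fun z : ℝ => ((s, z) : ℝ × ℝ)) (0, 1) y :=
      (hasDerivAt_const y s).prodMk (hasDerivAt_id y)
    exact (hUderiv (s, y) (hmem hs y)).comp_hasDerivAt y hj
  have ht_deriv : ∀ {s : ℝ}, s ∈ Ioo (k:ℝ) ((k:ℝ)+1) → ∀ y : ℝ,
      HasDerivAt (fun r => u ω r y) (F (s, y) (1, 0)) s := by
    intro s hs y
    have hj : HasDerivAt (fun r : ℝ => ((r, y) : ℝ × ℝ)) (1, 0) s :=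
      (hasDerivAt_id s).prodMk (hasDerivAt_const s y)
    exact (hUderiv (s, y) (hmem hs y)).comp_hasDerivAt s hj
  have hVeq : ∀ {s : ℝ}, s ∈ Ioo (k:ℝ) ((k:ℝ)+1) → ∀ y : ℝ,
      deriv (u ω s) y = F (s, y) (0, 1) := fun hs y => (hx_deriv hs y).deriv
  have hFcont : ∀ q ∈ O, ContinuousAt F q := fun q hq =>
    (((hU.contDiffAt (hOopen.mem_nhds hq)).fderiv_right (m := 1) (WithTop.coe_le_coe.mpr le_top))).continuousAt
  -- basic constants
  set v₀ := deriv (u ω t) x with hv₀def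
  have hv₀ : 2 * σ⁻¹ < v₀ := hcon
  have hv₀pos : 0 < v₀ := lt_trans (by positivity) hv₀
  have h2lt : 2 < σ * v₀ := by
    have h := mul_lt_mul_of_pos_left hv₀ σpos
    have : σ * (2 * σ⁻¹) = 2 := by field_simp
    linarith
  have hσv₀ : (σ * v₀)⁻¹ < 1/2 := by
    have h0 : (0:ℝ) < σ * v₀ := by positivity
    rw [inv_lt_comm₀ h0 (by norm_num)]
    linarith
  set ε := (t - (k:ℝ) - (σ * v₀)⁻¹)/2 with hεdef
  have hipos : 0 < (σ * v₀)⁻¹ := by positivity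
  have hεpos : 0 < ε := by
    have : (σ * v₀)⁻¹ < t - (k:ℝ) := by linarith
    simp only [hεdef]; linarith
  set c := (k:ℝ) + ε with hcdef
  have hck : (k:ℝ) < c := by linarith
  have htc : (σ * v₀)⁻¹ < t - c := by
    simp only [hcdef, hεdef]; linarith
  have hct : c < t := by linarith
  set g : ℝ → ℝ := fun s => (σ * (s - c))⁻¹ with hgdef
  have hgt : g t < v₀ := by
    have h1 : v₀⁻¹ < σ * (t - c) := by
      have := mul_lt_mul_of_pos_left htc σpos
      have he : σ * (σ * v₀)⁻¹ = v₀⁻¹ := by field_simp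
      linarith
    have h2 : (0:ℝ) < v₀⁻¹ := by positivity
    have := inv_strictAnti₀ h2 h1
    simpa [hgdef] using this
  -- periodic sections
  have ht0 : (0:ℝ) ≤ t := by linarith
  have hper_t : Function.Periodic (deriv (u ω t)) 1 := periodic_deriv'_s3 (sol_space ω t ht0).2
  set x₀' := Int.fract x with hx₀def
  have hx₀mem : x₀' ∈ Icc (0:ℝ) 1 := ⟨Int.fract_nonneg x, (Int.fract_lt_one x).le⟩
  have hvx₀ : deriv (u ω t) x₀' = v₀ := by
    have : x₀' = x - (⌊x⌋ : ℝ) * 1 := by rw [mul_one]; exact (Int.self_sub_floor x).symm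
    rw [this, hper_t.sub_int_mul_eq]
  have ht_mem : t ∈ Ioo (k:ℝ) ((k:ℝ)+1) := ⟨by linarith, ht2⟩
  -- bound on the slope on the compact set K'
  set K' : Set (ℝ × ℝ) := Icc c t ×ˢ Icc (0:ℝ) 1 with hK'def
  have hK'O : K' ⊆ O := by
    rintro ⟨s, y⟩ ⟨⟨hs1, hs2⟩, -⟩
    exact ⟨⟨lt_of_lt_of_le hck hs1, lt_of_le_of_lt hs2 ht2⟩, mem_univ _⟩
  have hVcontOn : ContinuousOn (fun q : ℝ × ℝ => deriv (u ω q.1) q.2) K' := by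
    have h1 : ContinuousOn (fun q : ℝ × ℝ => F q (0, 1)) K' := fun q hq =>
      (((ContinuousLinearMap.apply ℝ ℝ ((0:ℝ), (1:ℝ))).continuous.continuousAt).comp
        (hFcont q (hK'O hq))).continuousWithinAt
    exact h1.congr (fun q hq => hVeq (hK'O hq).1 q.2)
  have hK'ne : ((t, x₀') : ℝ × ℝ) ∈ K' := ⟨⟨hct.le, le_refl t⟩, hx₀mem⟩
  obtain ⟨qB, hqBmem, hqBmax⟩ :=
    (isCompact_Icc.prod isCompact_Icc).exists_isMaxOn ⟨(t, x₀'), hK'ne⟩ hVcontOn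
  set M₀ := max (deriv (u ω qB.1) qB.2) 0 with hM₀def
  have hM₀bound : ∀ q ∈ K', deriv (u ω q.1) q.2 ≤ M₀ := fun q hq =>
    le_max_of_le_left (hqBmax hq)
  have hM₀0 : (0:ℝ) ≤ M₀ := le_max_right _ _
  -- choice of t₁
  set δ := min ((t - c)/2) ((σ * (M₀ + 1))⁻¹) with hδdef
  have hδpos : 0 < δ := lt_min (by linarith) (by positivity)
  set t₁ := c + δ with ht₁def
  have hct₁ : c < t₁ := by linarith
  have ht₁t : t₁ < t := by
    have : δ ≤ (t - c)/2 := min_le_left _ _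
    simp only [ht₁def]; linarith
  have hgt₁ : M₀ + 1 ≤ g t₁ := by
    have h1 : σ * δ ≤ (M₀ + 1)⁻¹ := by
      have h2 : δ ≤ (σ * (M₀ + 1))⁻¹ := min_le_right _ _
      have h3 := mul_le_mul_of_nonneg_left h2 σpos.le
      have h4 : σ * (σ * (M₀ + 1))⁻¹ = (M₀ + 1)⁻¹ := by
        field_simp
      linarith
    have h5 : (0:ℝ) < σ * δ := by positivity
    have h6 := inv_anti₀ h5 h1
    rw [inv_inv] at h6
    have : g t₁ = (σ * δ)⁻¹ := by simp only [hgdef, ht₁def]; ring_nf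
    linarith
  -- the compact set D and the maximum point of w on it
  set D : Set (ℝ × ℝ) := Icc t₁ t ×ˢ Icc (0:ℝ) 1 with hDdef
  have hDK' : D ⊆ K' := by
    rintro ⟨s, y⟩ ⟨⟨hs1, hs2⟩, hy⟩
    exact ⟨⟨hct₁.le.trans hs1, hs2⟩, hy⟩
  set w : ℝ × ℝ → ℝ := fun q => deriv (u ω q.1) q.2 - g q.1 with hwdef
  have hgcont : ContinuousOn (fun q : ℝ × ℝ => g q.1) D := by
    apply ContinuousOn.inv₀
    · exact (continuous_const.mul (continuous_fst.sub continuous_const)).continuousOn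
    · rintro ⟨s, y⟩ ⟨⟨hs1, hs2⟩, -⟩
      have hcs : c < s := lt_of_lt_of_le hct₁ hs1
      exact ne_of_gt (mul_pos σpos (sub_pos.mpr hcs))
  have hwcont : ContinuousOn w D := (hVcontOn.mono hDK').sub hgcont
  have hDne : ((t, x₀') : ℝ × ℝ) ∈ D := ⟨⟨ht₁t.le, le_refl t⟩, hx₀mem⟩
  obtain ⟨qs, hqsmem, hqsmax⟩ :=
    (isCompact_Icc.prod isCompact_Icc).exists_isMaxOn ⟨(t, x₀'), hDne⟩ hwcont
  obtain ⟨⟨hqs1, hqs2⟩, hqsx⟩ := hqsmem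
  have hwqs_pos : 0 < w qs := by
    have h1 : w (t, x₀') ≤ w qs := hqsmax hDne
    have h2 : w (t, x₀') = v₀ - g t := by simp [hwdef, hvx₀]
    linarith
  have hts_gt : t₁ < qs.1 := by
    rcases lt_or_eq_of_le hqs1 with h | h
    · exact h
    · exfalso
      have hm : qs ∈ K' := hDK' ⟨⟨hqs1, hqs2⟩, hqsx⟩
      have h1 : deriv (u ω qs.1) qs.2 ≤ M₀ := hM₀bound qs hm
      have h2 : g qs.1 = g t₁ := by rw [← h]
      have : w qs ≤ M₀ - g t₁ := by simp only [hwdef]; rw [h2] at *; linarith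
      linarith
  have hts_mem : qs.1 ∈ Ioo (k:ℝ) ((k:ℝ)+1) :=
    ⟨by linarith, lt_of_le_of_lt hqs2 ht2⟩
  have hts0 : (0:ℝ) ≤ qs.1 := by linarith
  have hcqs : c < qs.1 := by linarith
  have hgqs_pos : 0 < g qs.1 := by
    simp only [hgdef]
    exact inv_pos.mpr (mul_pos σpos (sub_pos.mpr hcqs))
  -- spatial analysis at the maximum point
  have husm : ContDiff ℝ (⊤ : ℕ∞) (u ω qs.1) := (sol_space ω qs.1 hts0).1
  have huper : Function.Periodic (u ω qs.1) 1 := (sol_space ω qs.1 hts0).2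
  set hfun := deriv (u ω qs.1) with hhdef
  have hhsm : ContDiff ℝ (↑(⊤:ℕ∞)) hfun := (contDiff_infty_iff_deriv.mp (husm.of_le (by simp))).2
  have hhper : Function.Periodic hfun 1 := periodic_deriv'_s3 huper
  have hmax_h : ∀ y : ℝ, hfun y ≤ hfun qs.2 := by
    intro y
    have h1 : hfun (Int.fract y) ≤ hfun qs.2 := by
      have hm : ((qs.1, Int.fract y) : ℝ × ℝ) ∈ D :=
        ⟨⟨hqs1, hqs2⟩, ⟨Int.fract_nonneg y, (Int.fract_lt_one y).le⟩⟩
      have h2 : w (qs.1, Int.fract y) ≤ w qs := hqsmax hm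
      simp only [hwdef] at h2
      have : w qs = hfun qs.2 - g qs.1 := by simp [hwdef, hhdef]
      simp only [hhdef]
      linarith [h2]
    have h3 : hfun y = hfun (Int.fract y) := by
      have : Int.fract y = y - (⌊y⌋ : ℝ) * 1 := by
        rw [mul_one]; exact (Int.self_sub_floor y).symm
      rw [this, hhper.sub_int_mul_eq]
    linarith
  have hlocmax : IsLocalMax hfun qs.2 := Filter.Eventually.of_forall hmax_h
  have hd1 : deriv hfun qs.2 = 0 := hlocmax.deriv_eq_zero
  have hd2 : deriv (deriv hfun) qs.2 ≤ 0 := deriv2_nonpos_of_isLocalMax hhsm hlocmax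
  -- PDE identity in x at time qs.1
  have hPDE : ∀ y : ℝ,
      F (qs.1, y) (1, 0) + deriv f (u ω qs.1 y) * hfun y - ν * deriv hfun y = 0 := by
    intro y
    have h0 := sol_eq ω k qs.1 hts_mem y
    rwa [(ht_deriv hts_mem y).deriv] at h0
  -- second derivative of U at qs
  have hqsO : qs ∈ O := hK'O (hDK' ⟨⟨hqs1, hqs2⟩, hqsx⟩)
  have hFd : HasFDerivAt F (fderiv ℝ F qs) qs :=
    ((((hU.contDiffAt (hOopen.mem_nhds hqsO)).fderiv_right (m := 1)
      (WithTop.coe_le_coe.mpr le_top))).differentiableAt (by simp)).hasFDerivAt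
  set A := fderiv ℝ F qs with hAdef
  have hsymm : A (1, 0) (0, 1) = A (0, 1) (1, 0) :=
    second_derivative_symmetric_of_eventually
      (Filter.eventually_of_mem (hOopen.mem_nhds hqsO) (fun y hy => hUderiv y hy)) hFd _ _
  -- differentiating the PDE in x at qs.2
  have hj : HasDerivAt (fun z : ℝ => ((qs.1, z) : ℝ × ℝ)) (0, 1) qs.2 :=
    (hasDerivAt_const qs.2 qs.1).prodMk (hasDerivAt_id qs.2)
  have hF1 : HasDerivAt (fun z : ℝ => F (qs.1, z)) (A (0, 1)) qs.2 :=
    hFd.comp_hasDerivAt qs.2 hj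
  have hp : HasDerivAt (fun z : ℝ => F (qs.1, z) (1, 0)) (A (0, 1) (1, 0)) qs.2 :=
    ((ContinuousLinearMap.apply ℝ ℝ ((1:ℝ), (0:ℝ))).hasFDerivAt).comp_hasDerivAt qs.2 hF1
  have hu_dAt : HasDerivAt (u ω qs.1) (hfun qs.2) qs.2 :=
    (husm.differentiable (by simp) qs.2).hasDerivAt
  have hf'sm : ContDiff ℝ (↑(⊤:ℕ∞)) (deriv f) :=
    (contDiff_infty_iff_deriv.mp (flux_smooth.of_le (by simp))).2
  have hf'dAt : HasDerivAt (deriv f) (deriv (deriv f) (u ω qs.1 qs.2)) (u ω qs.1 qs.2) :=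
    (hf'sm.differentiable (by simp) _).hasDerivAt
  have hcomp : HasDerivAt (fun y => deriv f (u ω qs.1 y))
      (deriv (deriv f) (u ω qs.1 qs.2) * hfun qs.2) qs.2 := hf'dAt.comp qs.2 hu_dAt
  have hh_dAt : HasDerivAt hfun (deriv hfun qs.2) qs.2 :=
    (hhsm.differentiable (by simp) qs.2).hasDerivAt
  have hdh_dAt : HasDerivAt (deriv hfun) (deriv (deriv hfun) qs.2) qs.2 :=
    ((contDiff_infty_iff_deriv.mp hhsm).2.differentiable (by simp) qs.2).hasDerivAt
  have htotal : HasDerivAt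
      (fun y : ℝ => F (qs.1, y) (1, 0) + deriv f (u ω qs.1 y) * hfun y - ν * deriv hfun y)
      (A (0, 1) (1, 0) + (deriv (deriv f) (u ω qs.1 qs.2) * hfun qs.2 * hfun qs.2
        + deriv f (u ω qs.1 qs.2) * deriv hfun qs.2) - ν * deriv (deriv hfun) qs.2) qs.2 :=
    (hp.add (hcomp.mul hh_dAt)).sub (hdh_dAt.const_mul ν)
  have hzero : (fun y : ℝ => F (qs.1, y) (1, 0) + deriv f (u ω qs.1 y) * hfun y
      - ν * deriv hfun y) = fun _ => (0:ℝ) := funext hPDE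
  rw [hzero] at htotal
  have heq1 : A (0, 1) (1, 0) + (deriv (deriv f) (u ω qs.1 qs.2) * hfun qs.2 * hfun qs.2
      + deriv f (u ω qs.1 qs.2) * deriv hfun qs.2) - ν * deriv (deriv hfun) qs.2 = 0 :=
    htotal.unique (hasDerivAt_const qs.2 0)
  have hflux : σ ≤ deriv (deriv f) (u ω qs.1 qs.2) := strongly_convex _
  have hA_le : A (0, 1) (1, 0) ≤ -σ * (hfun qs.2)^2 := by
    rw [hd1] at heq1
    exact arith_A_le νpos σpos hflux hd2 heq1
  -- time derivative at the maximum point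
  have hg_dAt : HasDerivAt g (-(σ * (g qs.1)^2)) qs.1 := by
    have hinner : HasDerivAt (fun s : ℝ => σ * (s - c)) σ qs.1 := by
      simpa using ((hasDerivAt_id qs.1).sub_const c).const_mul σ
    have hne : σ * (qs.1 - c) ≠ 0 := ne_of_gt (mul_pos σpos (sub_pos.mpr hcqs))
    have := hinner.inv hne
    have hval : -(σ * (g qs.1)^2) = -σ / (σ * (qs.1 - c))^2 := by
      show -(σ * ((σ * (qs.1 - c))⁻¹)^2) = -σ / (σ * (qs.1 - c))^2
      field_simp
    rw [hval]
    exact this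
  have hj2 : HasDerivAt (fun r : ℝ => ((r, qs.2) : ℝ × ℝ)) (1, 0) qs.1 :=
    (hasDerivAt_id qs.1).prodMk (hasDerivAt_const qs.1 qs.2)
  have hF2 : HasDerivAt (fun s : ℝ => F (s, qs.2)) (A (1, 0)) qs.1 :=
    hFd.comp_hasDerivAt qs.1 hj2
  have hq' : HasDerivAt (fun s : ℝ => F (s, qs.2) (0, 1)) (A (1, 0) (0, 1)) qs.1 :=
    ((ContinuousLinearMap.apply ℝ ℝ ((0:ℝ), (1:ℝ))).hasFDerivAt).comp_hasDerivAt qs.1 hF2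
  have heqev : (fun s : ℝ => deriv (u ω s) qs.2) =ᶠ[𝓝 qs.1] (fun s : ℝ => F (s, qs.2) (0, 1)) :=
    Filter.eventually_of_mem (isOpen_Ioo.mem_nhds hts_mem) (fun s hs => hVeq hs qs.2)
  have hqd : HasDerivAt (fun s : ℝ => deriv (u ω s) qs.2) (A (1, 0) (0, 1)) qs.1 :=
    hq'.congr_of_eventuallyEq heqev
  have hφ : HasDerivAt (fun s : ℝ => deriv (u ω s) qs.2 - g s)
      (A (1, 0) (0, 1) + σ * (g qs.1)^2) qs.1 := by
    have := hqd.sub hg_dAt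
    rw [sub_neg_eq_add] at this
    exact this
  have hmaxφ : ∀ s ∈ Ioo t₁ qs.1,
      deriv (u ω s) qs.2 - g s ≤ deriv (u ω qs.1) qs.2 - g qs.1 := by
    intro s hs
    have hm : ((s, qs.2) : ℝ × ℝ) ∈ D := ⟨⟨hs.1.le, hs.2.le.trans hqs2⟩, hqsx⟩
    exact hqsmax hm
  have hd_nonneg : 0 ≤ A (1, 0) (0, 1) + σ * (g qs.1)^2 :=
    deriv_nonneg_of_left_max hφ hts_gt hmaxφ
  -- final contradiction
  have hcontact : g qs.1 < hfun qs.2 := by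
    have : w qs = hfun qs.2 - g qs.1 := by simp [hwdef, hhdef]
    linarith
  rw [hsymm] at hd_nonneg
  exact arith_contra hd_nonneg hA_le σpos hgqs_pos hcontact


/-- For a solution of the kick-forced generalised Burgers equation,
almost surely `u_x(t,x) ≤ 2σ⁻¹` for all `t ∈ [k + 1/2, k+1)`, `k ∈ ℕ`, and all `x`;
the bound depends neither on `u₀`, nor on `ν`, nor on `k`. -/
theorem statement3
    {Ω : Type} [MeasurableSpace Ω] (P : Measure Ω)
    (f : ℝ → ℝ) (σ ν : ℝ) (ζ : ℕ → Ω → ℝ → ℝ) (u₀ : ℝ → ℝ) (u : Ω → ℝ → ℝ → ℝ)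
    (hsetup : KickSetup P f σ ν ζ u₀ u) :
    ∀ᵐ ω ∂P, ∀ k : ℕ, ∀ t ∈ Set.Ico ((k:ℝ) + 1/2) ((k:ℝ) + 1), ∀ x : ℝ,
      deriv (u ω t) x ≤ 2 * σ⁻¹ := by
  refine Filter.Eventually.of_forall ?_
  intro ω
  exact key_bound f σ ν u hsetup.flux.sigma_pos hsetup.nu_mem.1 hsetup.flux.smooth
    hsetup.flux.strongly_convex
    (fun ω' t' ht' => ⟨(hsetup.sol_space ω' t' ht').smooth, (hsetup.sol_space ω' t' ht').periodic⟩)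
    hsetup.sol_smooth (fun ω' i t' ht' x => hsetup.sol_eq ω' i t' ht' x) ω

end
end
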